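/- arXiv:2308.15546 — 7 statements merged into one kernel-verified Lean document; each statement's English description precedes it below -/
import Mathlib

section
/- Let G = (V,E) be a finite simple graph, let 0 ≤ α ≤ 1, and let k ≤ |V|. Let S ⊆ V with |S| = k be a set of k vertices of largest degrees, i.e., d(u) ≥ d(w) for every u ∈ S and w ∈ V∖S. Then for every set O ⊆ V with |O| = k, cov_α(S) ≥ cov_α(O) − 2k². -/
/-! Summing degrees over a vertex set `X` counts every edge inside `X` twice and every edge
leaving `X` once, so `∑_{v ∈ X} d(v) = 2 m(X) + m(X, V∖X)`, and a top-degree set `S` maximizes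
this sum among sets of its size. Multiplying `2 m(O) + m(O, V∖O) ≤ 2 m(S) + m(S, V∖S)` by `α`
controls the boundary terms of `cov_α`, and the error left over is `(3α - 1)(m(O) - m(S))`,
with `|3α - 1| ≤ 2` and `0 ≤ m(·) ≤ k²`. -/

open Finset

/-- Number of edges of `G` with both endpoints in `X`. -/
noncomputable def mIn {V : Type*} (G : SimpleGraph V) (X : Finset V) : ℕ :=
  {e ∈ G.edgeSet | ∀ v ∈ e, v ∈ X}.ncard

/-- Number of edges of `G` with one endpoint in `X` and the other in `Y`. -/
noncomputable def mBtw {V : Type*} (G : SimpleGraph V) (X Y : Finset V) : ℕ :=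
  {e ∈ G.edgeSet | ∃ u ∈ X, ∃ w ∈ Y, e = s(u, w)}.ncard

/-- `cov_α(S) = (1-α)·m(S) + α·m(S, V∖S)`. -/
noncomputable def cov {V : Type*} [Fintype V] [DecidableEq V] (G : SimpleGraph V) (α : ℝ)
    (S : Finset V) : ℝ :=
  (1 - α) * mIn G S + α * mBtw G S Sᶜ

section
variable {V : Type*} [Fintype V] [DecidableEq V]

lemma card_filter_mem_sym2 {X : Finset V} {e : Sym2 V} (he : ¬e.IsDiag) :
    #{v ∈ X | v ∈ e} = 2 * (if ∀ v ∈ e, v ∈ X then 1 else 0)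
      + if ∃ u ∈ X, ∃ w ∈ Xᶜ, e = s(u, w) then 1 else 0 := by
  induction e with
  | h a b =>
  have hab : a ≠ b := he
  by_cases ha : a ∈ X <;> by_cases hb : b ∈ X <;>
    simp [Sym2.mem_iff, ha, hb, filter_or, filter_eq', hab] <;> grind

variable (G : SimpleGraph V) [DecidableRel G.Adj]

lemma mIn_eq_card_filter (X : Finset V) :
    mIn G X = #{e ∈ G.edgeFinset | ∀ v ∈ e, v ∈ X} := by
  rw [mIn, ← Set.ncard_coe_finset]
  simp

lemma mBtw_eq_card_filter (X Y : Finset V) :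
    mBtw G X Y = #{e ∈ G.edgeFinset | ∃ u ∈ X, ∃ w ∈ Y, e = s(u, w)} := by
  rw [mBtw, ← Set.ncard_coe_finset]
  simp

lemma mIn_le_card_sq (X : Finset V) : mIn G X ≤ #X ^ 2 := by
  rw [mIn_eq_card_filter, sq, ← card_product]
  calc #{e ∈ G.edgeFinset | ∀ v ∈ e, v ∈ X} ≤ #X.sym2 :=
        card_le_card fun e he => mem_sym2_iff.mpr (mem_filter.mp he).2
    _ ≤ #(X ×ˢ X) := by rw [sym2_eq_image]; exact card_image_le

lemma sum_degree_eq (X : Finset V) :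
    ∑ v ∈ X, G.degree v = 2 * mIn G X + mBtw G X Xᶜ := by
  have hdeg : ∀ v, G.degree v = #{e ∈ G.edgeFinset | v ∈ e} := fun v => by
    rw [← G.card_incidenceFinset_eq_degree, G.incidenceFinset_eq_filter]
  simp_rw [hdeg]
  rw [show ∑ v ∈ X, #{e ∈ G.edgeFinset | v ∈ e} = ∑ e ∈ G.edgeFinset, #{v ∈ X | v ∈ e} from
    sum_card_bipartiteAbove_eq_sum_card_bipartiteBelow (· ∈ ·)]
  rw [sum_congr rfl fun e he =>
      card_filter_mem_sym2 (G.not_isDiag_of_mem_edgeSet (G.mem_edgeFinset.mp he)),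
    sum_add_distrib, ← mul_sum, ← card_filter, ← card_filter, mIn_eq_card_filter,
    mBtw_eq_card_filter]

end

lemma sum_le_sum_of_forall_le_of_card_eq {ι M : Type*} [DecidableEq ι] [AddCommMonoid M]
    [LinearOrder M] [IsOrderedAddMonoid M] (f : ι → M) {S O : Finset ι} (hcard : #O = #S)
    (htop : ∀ u ∈ S, ∀ w ∉ S, f w ≤ f u) :
    ∑ v ∈ O, f v ≤ ∑ v ∈ S, f v := by
  rw [← sum_sdiff (inter_subset_left : O ∩ S ⊆ O), sdiff_inter_self_left,
    ← sum_sdiff (inter_subset_right : O ∩ S ⊆ S), inter_comm, sdiff_inter_self_left]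
  gcongr ?_ + _
  have hc : #(O \ S) = #(S \ O) := card_sdiff_comm hcard
  rcases (S \ O).eq_empty_or_nonempty with h | h
  · rw [h, card_empty, card_eq_zero] at hc
    simp [h, hc]
  obtain ⟨u, hu, hmin⟩ := exists_min_image (S \ O) f h
  calc ∑ v ∈ O \ S, f v ≤ #(O \ S) • f u :=
        sum_le_card_nsmul _ _ _ fun w hw => htop u (mem_sdiff.mp hu).1 w (mem_sdiff.mp hw).2
    _ = #(S \ O) • f u := by rw [hc]
    _ ≤ ∑ v ∈ S \ O, f v := card_nsmul_le_sum _ _ _ hmin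

lemma cov_sub_two_mul_sq_le {V : Type*} [Fintype V] [DecidableEq V] (G : SimpleGraph V)
    [DecidableRel G.Adj] {α : ℝ} (hα0 : 0 ≤ α) (hα1 : α ≤ 1) {S O : Finset V} {k : ℕ}
    (hS : #S ≤ k) (hO : #O ≤ k) (hdeg : ∑ v ∈ O, G.degree v ≤ ∑ v ∈ S, G.degree v) :
    cov G α O - 2 * (k : ℝ) ^ 2 ≤ cov G α S := by
  rw [sum_degree_eq, sum_degree_eq] at hdeg
  have hdeg' : (2 * mIn G O + mBtw G O Oᶜ : ℝ) ≤ 2 * mIn G S + mBtw G S Sᶜ := by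
    exact_mod_cast hdeg
  have hS' : (mIn G S : ℝ) ≤ (k : ℝ) ^ 2 := by
    exact_mod_cast (mIn_le_card_sq G S).trans (Nat.pow_le_pow_left hS 2)
  have hO' : (mIn G O : ℝ) ≤ (k : ℝ) ^ 2 := by
    exact_mod_cast (mIn_le_card_sq G O).trans (Nat.pow_le_pow_left hO 2)
  have hS0 : (0 : ℝ) ≤ mIn G S := Nat.cast_nonneg _
  have hO0 : (0 : ℝ) ≤ mIn G O := Nat.cast_nonneg _
  unfold cov
  nlinarith [mul_le_mul_of_nonneg_left hdeg' hα0]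

theorem stmt0_general {V : Type*} [Fintype V] [DecidableEq V] (G : SimpleGraph V)
    [DecidableRel G.Adj] (α : ℝ) (hα0 : 0 ≤ α) (hα1 : α ≤ 1)
    (k : ℕ) (S : Finset V) (hScard : S.card = k)
    (hStop : ∀ u ∈ S, ∀ w ∉ S, G.degree w ≤ G.degree u) :
    ∀ O : Finset V, O.card = k → cov G α S ≥ cov G α O - 2 * (k : ℝ) ^ 2 := by
  intro O hOcard
  exact cov_sub_two_mul_sq_le G hα0 hα1 hScard.le hOcard.le
    (sum_le_sum_of_forall_le_of_card_eq _ (hOcard.trans hScard.symm) hStop)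

theorem stmt0 {V : Type*} [Fintype V] [DecidableEq V] (G : SimpleGraph V)
    [DecidableRel G.Adj] (α : ℝ) (hα0 : 0 ≤ α) (hα1 : α ≤ 1)
    (k : ℕ) (hk : k ≤ Fintype.card V)
    (S : Finset V) (hScard : S.card = k)
    (hStop : ∀ u ∈ S, ∀ w ∉ S, G.degree w ≤ G.degree u) :
    ∀ O : Finset V, O.card = k → cov G α S ≥ cov G α O - 2 * (k : ℝ) ^ 2 :=
  stmt0_general G α hα0 hα1 k S hScard hStop
end

section
/- Let G = (V,E) be a finite simple graph, let 0 ≤ α ≤ 1, and let O ⊆ V with |O| = k. Let w ∈ O and y ∈ V∖O with d(y) ≥ d(w), and set O' := (O∖{w}) ∪ {y}. Then cov_α(O') ≥ cov_α(O) − 2k. -/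
open Finset

/-!
By the handshake identity `2 m(S) + m(S, V∖S) = ∑_{v ∈ S} d(v)`, the weighted coverage is
`cov_α(S) = (1 - 3α) m(S) + α ∑_{v ∈ S} d(v)`. Swapping `w` for `y` does not decrease the degree
sum, and it changes `m` by at most `|O∖{w}| = k - 1`, since both `m(O)` and `m(O')` lie between
`m(O∖{w})` and `m(O∖{w}) + k - 1`. As `|1 - 3α| ≤ 2`, the loss is at most `2(k - 1)`.
-/

namespace SimpleGraph

section Finite

variable {V : Type*} [Finite V] (G : SimpleGraph V)

lemma mIn_mono {A B : Finset V} (h : A ⊆ B) : mIn G A ≤ mIn G B :=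
  Set.ncard_le_ncard fun _ ⟨he, hA⟩ => ⟨he, fun v hv => h (hA v hv)⟩

lemma mIn_insert_le [DecidableEq V] (x : V) (A : Finset V) :
    mIn G (insert x A) ≤ mIn G A + #A := by
  have hsub : {e ∈ G.edgeSet | ∀ v ∈ e, v ∈ insert x A} ⊆
      {e ∈ G.edgeSet | ∀ v ∈ e, v ∈ A} ∪ (fun a => s(x, a)) '' A := by
    rintro e ⟨he, hxA⟩
    induction e using Sym2.ind with | _ u v => ?_
    simp only [Sym2.mem_iff, forall_eq_or_imp, forall_eq, mem_insert] at hxA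
    rcases hxA with ⟨rfl | hu, rfl | hv⟩
    · exact (G.loopless.irrefl _ he).elim
    · exact Or.inr ⟨v, hv, rfl⟩
    · exact Or.inr ⟨u, hu, Sym2.eq_swap⟩
    · exact Or.inl ⟨he, by simp [hu, hv]⟩
  calc mIn G (insert x A) ≤ _ := Set.ncard_le_ncard hsub
    _ ≤ _ := Set.ncard_union_le _ _
    _ ≤ mIn G A + #A := by
      rw [← Set.ncard_coe_finset A]
      exact Nat.add_le_add_left (Set.ncard_image_le A.finite_toSet) _

lemma abs_mIn_insert_sub_mIn_insert_le [DecidableEq V] (x y : V) (A : Finset V) :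
    |(mIn G (insert x A) : ℝ) - mIn G (insert y A)| ≤ #A := by
  have hx : (mIn G (insert x A) : ℝ) ≤ mIn G A + #A := by exact_mod_cast G.mIn_insert_le x A
  have hy : (mIn G (insert y A) : ℝ) ≤ mIn G A + #A := by exact_mod_cast G.mIn_insert_le y A
  have hx' : (mIn G A : ℝ) ≤ mIn G (insert x A) := by exact_mod_cast G.mIn_mono (subset_insert x A)
  have hy' : (mIn G A : ℝ) ≤ mIn G (insert y A) := by exact_mod_cast G.mIn_mono (subset_insert y A)
  exact abs_sub_le_iff.2 ⟨by linarith, by linarith⟩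

end Finite

section Handshake

variable {V : Type*} [DecidableEq V] (G : SimpleGraph V) [DecidableRel G.Adj]

lemma mBtw_eq_card_interedges {S T : Finset V} (hST : Disjoint S T) :
    mBtw G S T = #(G.interedges S T) := by
  have : {e ∈ G.edgeSet | ∃ u ∈ S, ∃ w ∈ T, e = s(u, w)} =
      ↑((G.interedges S T).image fun p => s(p.1, p.2)) := by
    ext e
    simp only [Set.mem_ofPred_eq, coe_image, Set.mem_image, mem_coe, mem_interedges_iff,
      Prod.exists]
    constructor
    · rintro ⟨he, u, hu, v, hv, rfl⟩
      exact ⟨u, v, ⟨hu, hv, he⟩, rfl⟩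
    · rintro ⟨u, v, ⟨hu, hv, huv⟩, rfl⟩
      exact ⟨huv, u, hu, v, hv, rfl⟩
  rw [mBtw, this, Set.ncard_coe_finset, card_image_of_injOn]
  rintro ⟨u, v⟩ huv ⟨u', v'⟩ huv' h
  simp only [mem_coe, mem_interedges_iff] at huv huv'
  rcases Sym2.eq_iff.1 h with ⟨rfl, rfl⟩ | ⟨rfl, rfl⟩
  · rfl
  · exact (Finset.disjoint_left.1 hST huv.1 huv'.2.1).elim

variable [Fintype V]

lemma card_interedges_eq_sum (S T : Finset V) :
    #(G.interedges S T) = ∑ v ∈ S, #(G.neighborFinset v ∩ T) := by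
  rw [interedges_def, card_filter, sum_product]
  refine sum_congr rfl fun v _ => ?_
  rw [← card_filter]
  congr 1
  ext u
  simp [and_comm]

lemma mIn_eq_card_edgeFinset_induce (S : Finset V) :
    mIn G S = #(G.induce (S : Set V)).edgeFinset := by
  rw [← card_filter_edgeFinset_toFinset_subset, mIn, ← Set.ncard_coe_finset]
  congr 1
  ext e
  simp [subset_iff]

lemma two_mul_mIn_eq_sum (S : Finset V) :
    2 * mIn G S = ∑ v ∈ S, #(G.neighborFinset v ∩ S) := by
  rw [mIn_eq_card_edgeFinset_induce, ← sum_degrees_eq_twice_card_edges, ← sum_coe_sort S]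
  refine sum_congr rfl fun v _ => ?_
  convert congrArg card (G.map_neighborFinset_induce v) using 1
  · rw [card_map, card_neighborFinset_eq_degree]
    congr!
  · rw [toFinset_coe]

lemma two_mul_mIn_add_mBtw_compl (S : Finset V) :
    2 * mIn G S + mBtw G S Sᶜ = ∑ v ∈ S, G.degree v := by
  rw [two_mul_mIn_eq_sum, mBtw_eq_card_interedges G disjoint_compl_right,
    card_interedges_eq_sum, ← sum_add_distrib]
  refine sum_congr rfl fun v _ => ?_
  rw [← card_neighborFinset_eq_degree, ← card_union_of_disjoint
    (disjoint_compl_right.mono inter_subset_right inter_subset_right), ← inter_union_distrib_left,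
    union_compl, inter_univ]

lemma cov_eq_mIn_add_sum_degree (α : ℝ) (S : Finset V) :
    cov G α S = (1 - 3 * α) * mIn G S + α * ∑ v ∈ S, (G.degree v : ℝ) := by
  have h : (2 * mIn G S + mBtw G S Sᶜ : ℝ) = ∑ v ∈ S, (G.degree v : ℝ) := by
    exact_mod_cast G.two_mul_mIn_add_mBtw_compl S
  rw [cov]
  linear_combination α * h

end Handshake

end SimpleGraph

theorem stmt2 {V : Type*} [Fintype V] [DecidableEq V] (G : SimpleGraph V)
    [DecidableRel G.Adj] (α : ℝ) (hα0 : 0 ≤ α) (hα1 : α ≤ 1)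
    (k : ℕ) (O : Finset V) (hO : O.card = k)
    (w y : V) (hw : w ∈ O) (hy : y ∉ O) (hd : G.degree w ≤ G.degree y) :
    cov G α (insert y (O.erase w)) ≥ cov G α O - 2 * (k : ℝ) := by
  set A := O.erase w
  have hk : (#A : ℝ) + 1 = k := mod_cast (card_erase_add_one hw).trans hO
  have hdeg : (G.degree w : ℝ) ≤ G.degree y := by exact_mod_cast hd
  have hswap : -(2 * (#A : ℝ)) ≤ (1 - 3 * α) * (mIn G (insert y A) - mIn G (insert w A)) := by
    rw [neg_le]
    refine (neg_le_abs _).trans ?_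
    rw [abs_mul]
    exact mul_le_mul (abs_le.2 ⟨by linarith, by linarith⟩)
      (G.abs_mIn_insert_sub_mIn_insert_le y w A) (abs_nonneg _) zero_le_two
  rw [← insert_erase hw, G.cov_eq_mIn_add_sum_degree, G.cov_eq_mIn_add_sum_degree,
    sum_insert (notMem_erase w O), sum_insert fun h => hy (mem_of_mem_erase h)]
  linarith [mul_nonneg hα0 (sub_nonneg.2 hdeg)]
end

section
/- Let G = (V,E) be a finite simple graph, let 0 < α ≤ 1 and 0 < ε ≤ 1, and let k ≤ |V|. Let S ⊆ V with |S| = k be a set of k vertices of largest degrees (d(u) ≥ d(w) for all u ∈ S, w ∈ V∖S), and let v₁ be a vertex of maximum degree in G (so v₁ ∈ S may be assumed, since S contains a vertex of maximum degree). If d(v₁) ≥ 2k²/(ε·α) + k, then 2k² ≤ ε·cov_α(S). -/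
open Finset

/-! A vertex `v₁ ∈ S` has at most `k - 1` neighbours inside `S`, so all but at most `k` of its
`d(v₁)` edges leave `S`. Hence `m(S, V∖S) ≥ d(v₁) - k ≥ 2k²/(εα)`, and already the term
`α·m(S, V∖S)` of `cov_α(S)` is at least `2k²/ε`. -/

namespace SimpleGraph

variable {V : Type*} [Fintype V] [DecidableEq V] (G : SimpleGraph V) [DecidableRel G.Adj]

theorem card_neighborFinset_inter_le_mBtw {X Y : Finset V} {v : V} (hv : v ∈ X) :
    #(G.neighborFinset v ∩ Y) ≤ mBtw G X Y := by
  rw [mBtw, ← Set.ncard_coe_finset]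
  refine Set.ncard_le_ncard_of_injOn (fun w => s(v, w)) ?_ ?_ (Set.toFinite _)
  · intro w hw
    rw [coe_inter, Set.mem_inter_iff, mem_coe, mem_neighborFinset] at hw
    exact ⟨G.mem_edgeSet.mpr hw.1, v, hv, w, hw.2, rfl⟩
  · intro a _ b _ hab
    exact Sym2.congr_right.mp hab

theorem degree_le_mBtw_compl_add_card {S : Finset V} {v : V} (hv : v ∈ S) :
    G.degree v ≤ mBtw G S Sᶜ + #S := by
  calc G.degree v ≤ #(G.neighborFinset v \ S) + #S := card_le_card_sdiff_add_card
    _ = #(G.neighborFinset v ∩ Sᶜ) + #S := by rw [sdiff_eq_inter_compl]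
    _ ≤ mBtw G S Sᶜ + #S := by gcongr; exact G.card_neighborFinset_inter_le_mBtw hv

end SimpleGraph

theorem mul_mBtw_compl_le_cov {V : Type*} [Fintype V] [DecidableEq V] (G : SimpleGraph V)
    {α : ℝ} (hα : α ≤ 1) (S : Finset V) : α * mBtw G S Sᶜ ≤ cov G α S := by
  have : (0 : ℝ) ≤ (1 - α) * mIn G S := mul_nonneg (by linarith) (Nat.cast_nonneg _)
  rw [cov]
  linarith

theorem stmt5_general {V : Type*} [Fintype V] [DecidableEq V] (G : SimpleGraph V)
    [DecidableRel G.Adj] (α ε : ℝ) (hα0 : 0 < α) (hα1 : α ≤ 1)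
    (hε0 : 0 < ε)
    (k : ℕ)
    (S : Finset V) (hScard : S.card = k)
    (v₁ : V) (hv₁S : v₁ ∈ S)
    (hdeg : (G.degree v₁ : ℝ) ≥ 2 * (k : ℝ) ^ 2 / (ε * α) + k) :
    2 * (k : ℝ) ^ 2 ≤ ε * cov G α S := by
  have hεα : 0 < ε * α := mul_pos hε0 hα0
  have hdeg_le : (G.degree v₁ : ℝ) ≤ mBtw G S Sᶜ + k := by
    exact_mod_cast hScard ▸ G.degree_le_mBtw_compl_add_card hv₁S
  have hmBtw : 2 * (k : ℝ) ^ 2 ≤ ε * α * mBtw G S Sᶜ := by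
    rw [← div_le_iff₀' hεα]
    linarith
  calc 2 * (k : ℝ) ^ 2 ≤ ε * (α * mBtw G S Sᶜ) := by rwa [← mul_assoc]
    _ ≤ ε * cov G α S := by gcongr; exact mul_mBtw_compl_le_cov G hα1 S

theorem stmt5 {V : Type*} [Fintype V] [DecidableEq V] (G : SimpleGraph V)
    [DecidableRel G.Adj] (α ε : ℝ) (hα0 : 0 < α) (hα1 : α ≤ 1)
    (hε0 : 0 < ε) (hε1 : ε ≤ 1)
    (k : ℕ) (hk : k ≤ Fintype.card V)
    (S : Finset V) (hScard : S.card = k)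
    (hStop : ∀ u ∈ S, ∀ w ∉ S, G.degree w ≤ G.degree u)
    (v₁ : V) (hv₁max : ∀ w : V, G.degree w ≤ G.degree v₁) (hv₁S : v₁ ∈ S)
    (hdeg : (G.degree v₁ : ℝ) ≥ 2 * (k : ℝ) ^ 2 / (ε * α) + k) :
    2 * (k : ℝ) ^ 2 ≤ ε * cov G α S :=
  stmt5_general G α ε hα0 hα1 hε0 k S hScard v₁ hv₁S hdeg
end

section
/- Let G = (V,E) be a finite simple graph with |V| = n, let 1/3 ≤ α ≤ 1 and 0 < ε < 1, and let k be an integer with k + ⌈4k/ε²⌉ ≤ n. Let V' ⊆ V be a set of k + ⌈4k/ε²⌉ vertices of largest degrees (d(u) ≥ d(w) for all u ∈ V', w ∈ V∖V'). Let O ⊆ V with |O| = k satisfy cov_α(O) ≥ cov_α(O') for every O' ⊆ V with |O'| = k. Set O_i := O ∩ V', O_o := O ∖ V', U := V' ∖ O_i, and t := |O_o|. Then the average of cov_α(O_i ∪ T) over all t-element subsets T of U is at least (1−ε)·cov_α(O); that is, (1/C(|U|,t)) · Σ_{T ⊆ U, |T| = t} cov_α(O_i ∪ T) ≥ (1−ε)·cov_α(O).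 -/
open Finset

/-!
Write `β = (3α - 1) / 2`, `d(S)` for the degree sum of `S` and `e(X, Y)` for the number of
ordered adjacent pairs in `X × Y`; then `cov_α(S) = α d(S) - β e(S, S)`. A uniformly random
`t`-subset `T` of `U` contains a given vertex of `U` with probability `p = t / |U|` and a given
pair with probability `q = C(t, 2) / C(|U|, 2)`, which makes the average of `cov_α(O_i ∪ T)` an
explicit expression. Every vertex of `O_o` has degree at most that of every vertex of `U`, so
`d(O_o) ≤ p d(U)` and the average is at least `cov_α(O) - β (2p e(O_i, U) + q e(U, U))`. It is
also at least `α ((1 - p) e(O_i, U) + (p - q) e(U, U))`, and at most `cov_α(O)` by optimality of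
`O`. As `|U| - t ≥ 4k / ε² ≥ 2t / ε`, we have `2p ≤ ε (1 - p)` and `q ≤ ε (p - q)`, so the loss
`β (2p e(O_i, U) + q e(U, U))` is at most `ε cov_α(O)`.
-/

namespace Finset
variable {α : Type*} [DecidableEq α]

lemma card_filter_powersetCard_subset_mul_choose {s U : Finset α} (hs : s ⊆ U) (t : ℕ) :
    #{T ∈ U.powersetCard t | s ⊆ T} * (#U).choose #s = (#U).choose t * t.choose #s := by
  rcases le_or_gt #s t with hst | hts
  · rw [card_filter_powersetCard_subset s U t hs hst, Nat.choose_mul hst, mul_comm]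
  · rw [Nat.choose_eq_zero_of_lt hts, mul_zero, filter_false_of_mem, card_empty, zero_mul]
    intro T hT hsT
    have := card_le_card hsT
    rw [(mem_powersetCard.1 hT).2] at this
    omega

variable {𝕜 : Type*} [Field 𝕜] [CharZero 𝕜]

lemma cast_card_filter_powersetCard_subset {s U : Finset α} (hs : s ⊆ U) (t : ℕ) :
    (#{T ∈ U.powersetCard t | s ⊆ T} : 𝕜) = (#U).choose t * (t.choose #s / (#U).choose #s) := by
  have hpos : ((#U).choose #s : 𝕜) ≠ 0 := by
    exact_mod_cast (Nat.choose_pos (card_le_card hs)).ne'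
  rw [mul_div_assoc', eq_div_iff hpos]
  exact_mod_cast card_filter_powersetCard_subset_mul_choose hs t

lemma sum_powersetCard_sum (U : Finset α) (t : ℕ) (f : α → 𝕜) :
    ∑ T ∈ U.powersetCard t, ∑ x ∈ T, f x = (#U).choose t * (t / #U) * ∑ x ∈ U, f x := by
  rw [sum_comm' (t' := U) (s' := fun x => {T ∈ U.powersetCard t | {x} ⊆ T}), mul_sum]
  · refine sum_congr rfl fun x hx => ?_
    rw [sum_const, nsmul_eq_mul,
      cast_card_filter_powersetCard_subset (singleton_subset_iff.2 hx)]
    simp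
  · intro T x
    simp only [mem_filter, mem_powersetCard, singleton_subset_iff]
    exact ⟨fun h => ⟨⟨h.1, h.2⟩, h.1.1 h.2⟩, fun h => ⟨h.1.1, h.1.2⟩⟩

lemma sum_powersetCard_sum_sum (U : Finset α) (t : ℕ) (g : α → α → 𝕜) (hg : ∀ x, g x x = 0) :
    ∑ T ∈ U.powersetCard t, ∑ x ∈ T, ∑ y ∈ T, g x y
      = (#U).choose t * (t.choose 2 / (#U).choose 2) * ∑ x ∈ U, ∑ y ∈ U, g x y := by
  simp_rw [← sum_product']
  rw [sum_comm' (t' := U ×ˢ U) (s' := fun p => {T ∈ U.powersetCard t | {p.1, p.2} ⊆ T}), mul_sum]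
  · refine sum_congr rfl fun ⟨x, y⟩ hxy => ?_
    rw [sum_const, nsmul_eq_mul]
    rcases eq_or_ne x y with rfl | hne
    · simp [hg]
    · rw [mem_product] at hxy
      rw [cast_card_filter_powersetCard_subset (insert_subset hxy.1 (singleton_subset_iff.2 hxy.2)),
        card_pair hne]
  · rintro T ⟨x, y⟩
    simp only [mem_filter, mem_powersetCard, mem_product, insert_subset_iff, singleton_subset_iff]
    exact ⟨fun h => ⟨⟨h.1, h.2⟩, h.1.1 h.2.1, h.1.1 h.2.2⟩, fun h => ⟨h.1.1, h.1.2⟩⟩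

lemma sum_le_card_div_mul_sum {ι K : Type*} [Field K] [LinearOrder K] [IsStrictOrderedRing K]
    {W U : Finset ι} {f : ι → K} (hWU : #W ≤ #U) (h : ∀ w ∈ W, ∀ u ∈ U, f w ≤ f u) :
    ∑ w ∈ W, f w ≤ #W / #U * ∑ u ∈ U, f u := by
  rcases U.eq_empty_or_nonempty with rfl | hU
  · simp [card_eq_zero.1 (Nat.le_zero.1 hWU)]
  rw [div_mul_eq_mul_div, le_div_iff₀ (by simpa using hU.card_pos), sum_mul]
  calc ∑ w ∈ W, f w * #U = ∑ w ∈ W, ∑ _u ∈ U, f w := by simp [mul_comm]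
    _ ≤ ∑ _w ∈ W, ∑ u ∈ U, f u := sum_le_sum fun w hw => sum_le_sum fun u hu => h w hw u hu
    _ = #W * ∑ u ∈ U, f u := by rw [sum_const, nsmul_eq_mul]

end Finset

lemma two_mul_div_le_mul_one_sub {K : Type*} [Field K] [LinearOrder K] [IsStrictOrderedRing K]
    {t u : ℕ} {ε : K} (hε : 0 ≤ ε) (h : 2 * (t : K) ≤ ε * (u - t)) :
    2 * (t / u : K) ≤ ε * (1 - t / u) := by
  rcases Nat.eq_zero_or_pos u with rfl | hu
  · simpa using hε
  have hu' : (u : K) ≠ 0 := by positivity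
  rw [← sub_nonneg]
  have : ε * (1 - t / u) - 2 * (t / u : K) = (ε * (u - t) - 2 * t) / u := by field_simp
  rw [this]
  exact div_nonneg (by linarith) (Nat.cast_nonneg u)

lemma choose_two_div_le_mul_sub {K : Type*} [Field K] [LinearOrder K] [IsStrictOrderedRing K]
    {t u : ℕ} {ε : K} (hε : 0 ≤ ε) (h : 2 * (t : K) ≤ ε * (u - t)) :
    (t.choose 2 / u.choose 2 : K) ≤ ε * (t / u - t.choose 2 / u.choose 2) := by
  rcases lt_or_ge u 2 with hu | hu
  · simp only [Nat.choose_eq_zero_of_lt hu, Nat.cast_zero, div_zero, sub_zero]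
    positivity
  have hu' : (2 : K) ≤ u := by exact_mod_cast hu
  rw [← sub_nonneg, Nat.cast_choose_two, Nat.cast_choose_two]
  have : ε * (t / u - t * (t - 1) / 2 / (u * (u - 1) / 2)) - t * (t - 1) / 2 / (u * (u - 1) / 2)
      = t * (ε * (u - t) - (t - 1)) / (u * (u - 1)) := by
    have : (u : K) - 1 ≠ 0 := by linarith
    field_simp
    ring
  rw [this]
  exact div_nonneg (mul_nonneg (Nat.cast_nonneg t) (by linarith)) (by nlinarith)

namespace SimpleGraph
variable {V : Type*} {G : SimpleGraph V}

lemma mIn_eq_mBtw_self (X : Finset V) : mIn G X = mBtw G X X := by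
  have hmem (e : Sym2 V) : (∀ v ∈ e, v ∈ X) ↔ ∃ u ∈ X, ∃ w ∈ X, e = s(u, w) := by
    induction e with
    | _ a b =>
      simp only [Sym2.mem_iff, forall_eq_or_imp, forall_eq]
      refine ⟨fun h => ⟨a, h.1, b, h.2, rfl⟩, fun ⟨u, hu, w, hw, h⟩ => ?_⟩
      rcases Sym2.eq_iff.1 h with ⟨rfl, rfl⟩ | ⟨rfl, rfl⟩
      exacts [⟨hu, hw⟩, ⟨hw, hu⟩]
  simp only [mIn, mBtw, hmem]

variable [DecidableRel G.Adj]

variable (G) in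
noncomputable def adjSum (X Y : Finset V) : ℝ := ∑ x ∈ X, ∑ y ∈ Y, if G.Adj x y then 1 else 0

lemma adjSum_eq_card_interedges (X Y : Finset V) : G.adjSum X Y = #(G.interedges X Y) := by
  rw [interedges_def, card_filter, sum_product, adjSum]
  push_cast
  rfl

lemma adjSum_comm (X Y : Finset V) : G.adjSum X Y = G.adjSum Y X := by
  rw [adjSum, adjSum, sum_comm]
  simp only [G.adj_comm]

lemma adjSum_nonneg (X Y : Finset V) : 0 ≤ G.adjSum X Y := by
  rw [adjSum_eq_card_interedges]
  positivity

lemma adjSum_mono {X X' Y Y' : Finset V} (hX : X ⊆ X') (hY : Y ⊆ Y') :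
    G.adjSum X Y ≤ G.adjSum X' Y' := by
  rw [adjSum_eq_card_interedges, adjSum_eq_card_interedges]
  exact_mod_cast card_le_card (G.interedges_mono hX hY)

lemma sum_degree_eq_adjSum_univ [Fintype V] (X : Finset V) :
    ∑ x ∈ X, (G.degree x : ℝ) = G.adjSum X univ := by
  refine sum_congr rfl fun x _ => ?_
  simp [← card_neighborFinset_eq_degree, neighborFinset_eq_filter]

variable [DecidableEq V]

lemma adjSum_union_left {X X' : Finset V} (h : Disjoint X X') (Y : Finset V) :
    G.adjSum (X ∪ X') Y = G.adjSum X Y + G.adjSum X' Y :=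
  sum_union h

lemma adjSum_union_right (X : Finset V) {Y Y' : Finset V} (h : Disjoint Y Y') :
    G.adjSum X (Y ∪ Y') = G.adjSum X Y + G.adjSum X Y' := by
  rw [adjSum_comm, adjSum_union_left h, adjSum_comm, adjSum_comm Y']

lemma mBtw_eq_card_image (X Y : Finset V) :
    mBtw G X Y = #((G.interedges X Y).image fun p => s(p.1, p.2)) := by
  rw [mBtw, ← Set.ncard_coe_finset]
  congr 1
  ext e
  simp only [Set.mem_ofPred_eq, interedges_def, coe_image, coe_filter, mem_product, Set.mem_image,
    Prod.exists]
  constructor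
  · rintro ⟨he, u, hu, w, hw, rfl⟩
    exact ⟨u, w, ⟨⟨hu, hw⟩, he⟩, rfl⟩
  · rintro ⟨u, w, ⟨⟨hu, hw⟩, huw⟩, rfl⟩
    exact ⟨huw, u, hu, w, hw, rfl⟩

lemma two_mul_mIn (X : Finset V) : 2 * (mIn G X : ℝ) = G.adjSum X X := by
  have hfiber : ∀ e ∈ (G.interedges X X).image fun p => s(p.1, p.2),
      #{p ∈ G.interedges X X | s(p.1, p.2) = e} = 2 := by
    simp only [mem_image, forall_exists_index, and_imp]
    rintro e ⟨a, b⟩ hab rfl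
    have hne : (a, b) ≠ (b, a) := fun h => (G.ne_of_adj (mem_filter.1 hab).2) (congrArg Prod.fst h)
    rw [← card_pair hne]
    congr 1
    ext ⟨x, y⟩
    simp only [interedges_def, mem_filter, mem_product, mem_insert, mem_singleton,
      Prod.mk.injEq, Sym2.eq_iff] at hab ⊢
    aesop (add safe Adj.symm)
  rw [mIn_eq_mBtw_self, mBtw_eq_card_image, adjSum_eq_card_interedges,
    card_eq_sum_card_image (fun p : V × V => s(p.1, p.2)) (G.interedges X X), sum_const_nat hfiber]
  push_cast
  ring

lemma mBtw_eq_adjSum {X Y : Finset V} (h : Disjoint X Y) : (mBtw G X Y : ℝ) = G.adjSum X Y := by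
  rw [mBtw_eq_card_image, adjSum_eq_card_interedges, card_image_of_injOn]
  rintro ⟨a, b⟩ hab ⟨c, d⟩ hcd hs
  simp only [coe_filter, interedges_def, Set.mem_ofPred_eq, mem_product] at hab hcd
  rcases Sym2.eq_iff.1 hs with ⟨rfl, rfl⟩ | ⟨rfl, rfl⟩
  · rfl
  · exact absurd hcd.1.2 (Finset.disjoint_left.1 h hab.1.1)

variable [Fintype V]

lemma cov_eq (α : ℝ) (X : Finset V) :
    cov G α X = α * ∑ x ∈ X, (G.degree x : ℝ) - (3 * α - 1) / 2 * G.adjSum X X := by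
  have hmIn := two_mul_mIn (G := G) X
  rw [cov, sum_degree_eq_adjSum_univ, ← union_compl X, adjSum_union_right _ disjoint_compl_right,
    mBtw_eq_adjSum disjoint_compl_right]
  linear_combination (1 - α) / 2 * hmIn

lemma cov_union_eq (α : ℝ) {X T : Finset V} (h : Disjoint X T) :
    cov G α (X ∪ T) = cov G α X
      + ∑ y ∈ T, (α * G.degree y - (3 * α - 1) * ∑ x ∈ X, if G.Adj x y then 1 else 0)
      - (3 * α - 1) / 2 * ∑ x ∈ T, ∑ y ∈ T, if G.Adj x y then 1 else 0 := by
  rw [cov_eq, cov_eq, sum_union h, adjSum_union_left h, adjSum_union_right _ h,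
    adjSum_union_right _ h, adjSum_comm T X, sum_sub_distrib, ← mul_sum, ← mul_sum, sum_comm]
  unfold adjSum
  ring

variable (G) in
noncomputable def avgCov (α : ℝ) (X U : Finset V) (t : ℕ) : ℝ :=
  1 / ((#U).choose t : ℝ) * ∑ T ∈ U.powersetCard t, cov G α (X ∪ T)

lemma avgCov_eq (α : ℝ) {X U : Finset V} (h : Disjoint X U) {t : ℕ} (ht : t ≤ #U) :
    G.avgCov α X U t = cov G α X
      + t / #U * (α * ∑ y ∈ U, (G.degree y : ℝ) - (3 * α - 1) * G.adjSum X U)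
      - (3 * α - 1) / 2 * (t.choose 2 / (#U).choose 2) * G.adjSum U U := by
  have hC : ((#U).choose t : ℝ) ≠ 0 := by exact_mod_cast (Nat.choose_pos ht).ne'
  rw [avgCov, sum_congr rfl fun T hT => cov_union_eq α (h.mono_right (mem_powersetCard.1 hT).1),
    sum_sub_distrib, sum_add_distrib, sum_const, card_powersetCard, nsmul_eq_mul,
    sum_powersetCard_sum, ← mul_sum, sum_powersetCard_sum_sum _ _ _ (by simp),
    sum_sub_distrib, ← mul_sum, ← mul_sum, sum_comm (s := U)]
  unfold adjSum
  field_simp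

lemma cov_sub_le_avgCov {α : ℝ} (hα0 : 1 / 3 ≤ α) {X W U : Finset V} (hXU : Disjoint X U)
    (hXW : Disjoint X W) (hWU : #W ≤ #U) (hdeg : ∀ w ∈ W, ∀ u ∈ U, G.degree w ≤ G.degree u) :
    cov G α (X ∪ W) - (3 * α - 1) / 2 * (2 * (#W / #U) * G.adjSum X U
        + (#W).choose 2 / (#U).choose 2 * G.adjSum U U) ≤ G.avgCov α X U #W := by
  have hDW : ∑ w ∈ W, (G.degree w : ℝ) ≤ #W / #U * ∑ u ∈ U, (G.degree u : ℝ) :=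
    sum_le_card_div_mul_sum hWU fun w hw u hu => by exact_mod_cast hdeg w hw u hu
  have hXX : G.adjSum X X ≤ G.adjSum (X ∪ W) (X ∪ W) :=
    adjSum_mono subset_union_left subset_union_left
  rw [avgCov_eq α hXU hWU, cov_eq, cov_eq, sum_union hXW]
  nlinarith [mul_le_mul_of_nonneg_left hDW (by linarith : (0 : ℝ) ≤ α),
    mul_le_mul_of_nonneg_left hXX (by linarith : (0 : ℝ) ≤ (3 * α - 1) / 2)]

lemma le_avgCov {α : ℝ} (hα0 : 0 ≤ α) (hα1 : α ≤ 1) {X U : Finset V} (hXU : Disjoint X U) {t : ℕ}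
    (ht : t ≤ #U) :
    α * ((1 - t / #U) * G.adjSum X U + (t / #U - t.choose 2 / (#U).choose 2) * G.adjSum U U)
      ≤ G.avgCov α X U t := by
  have hDX : G.adjSum X X + G.adjSum X U ≤ ∑ x ∈ X, (G.degree x : ℝ) := by
    rw [sum_degree_eq_adjSum_univ, ← adjSum_union_right _ hXU]
    exact adjSum_mono subset_rfl (subset_univ _)
  have hDU : G.adjSum U U + G.adjSum X U ≤ ∑ u ∈ U, (G.degree u : ℝ) := by
    rw [sum_degree_eq_adjSum_univ, adjSum_comm X, ← adjSum_union_right _ hXU.symm]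
    exact adjSum_mono subset_rfl (subset_univ _)
  have hp : (0 : ℝ) ≤ t / #U := by positivity
  have hq : (0 : ℝ) ≤ t.choose 2 / (#U).choose 2 := by positivity
  have hXX := adjSum_nonneg (G := G) X X
  have hA := adjSum_nonneg (G := G) X U
  have hB := adjSum_nonneg (G := G) U U
  rw [avgCov_eq α hXU ht, cov_eq]
  nlinarith [mul_nonneg (by linarith : 0 ≤ (1 - α) / 2) (by positivity : 0 ≤ G.adjSum X X
      + 2 * (t / #U) * G.adjSum X U + t.choose 2 / (#U).choose 2 * G.adjSum U U),
    mul_nonneg hα0 (sub_nonneg.2 hDX), mul_nonneg (mul_nonneg hα0 hp) (sub_nonneg.2 hDU)]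

theorem one_sub_mul_cov_le_avgCov {α ε : ℝ} (hα0 : 1 / 3 ≤ α) (hα1 : α ≤ 1) (hε : 0 ≤ ε)
    {X W U : Finset V} (hXU : Disjoint X U) (hXW : Disjoint X W) (hWU : #W ≤ #U)
    (hsize : 2 * (#W : ℝ) ≤ ε * (#U - #W))
    (hdeg : ∀ w ∈ W, ∀ u ∈ U, G.degree w ≤ G.degree u)
    (hopt : ∀ T ∈ U.powersetCard #W, cov G α (X ∪ T) ≤ cov G α (X ∪ W)) :
    (1 - ε) * cov G α (X ∪ W) ≤ G.avgCov α X U #W := by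
  set p : ℝ := #W / #U
  set q : ℝ := (#W).choose 2 / (#U).choose 2
  set A := G.adjSum X U
  set B := G.adjSum U U
  have hC : (0 : ℝ) < (#U).choose #W := by exact_mod_cast Nat.choose_pos hWU
  have havg_le : G.avgCov α X U #W ≤ cov G α (X ∪ W) := by
    rw [avgCov, one_div, inv_mul_le_iff₀ hC]
    calc _ ≤ ∑ _T ∈ U.powersetCard #W, cov G α (X ∪ W) := sum_le_sum hopt
      _ = _ := by rw [sum_const, card_powersetCard, nsmul_eq_mul]
  have hp : 2 * p ≤ ε * (1 - p) := two_mul_div_le_mul_one_sub hε hsize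
  have hq : q ≤ ε * (p - q) := choose_two_div_le_mul_sub hε hsize
  have hA : 0 ≤ A := adjSum_nonneg X U
  have hB : 0 ≤ B := adjSum_nonneg U U
  have hloss : (3 * α - 1) / 2 * (2 * p * A + q * B) ≤ ε * cov G α (X ∪ W) := calc
    _ ≤ α * (2 * p * A + q * B) := by gcongr; linarith
    _ ≤ α * (ε * (1 - p) * A + ε * (p - q) * B) := by gcongr
    _ = ε * (α * ((1 - p) * A + (p - q) * B)) := by ring
    _ ≤ ε * G.avgCov α X U #W := by gcongr; exact le_avgCov (by linarith) hα1 hXU hWU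
    _ ≤ ε * cov G α (X ∪ W) := by gcongr
  linarith [cov_sub_le_avgCov hα0 hXU hXW hWU hdeg]

end SimpleGraph

theorem stmt8_general {V : Type*} [Fintype V] [DecidableEq V] (G : SimpleGraph V)
    [DecidableRel G.Adj] (α ε : ℝ) (hα0 : 1 / 3 ≤ α) (hα1 : α ≤ 1)
    (hε0 : 0 < ε) (hε1 : ε < 1)
    (k : ℕ)
    (V' : Finset V) (hV'card : V'.card = k + ⌈(4 * (k : ℝ)) / ε ^ 2⌉₊)
    (hV'top : ∀ u ∈ V', ∀ w ∉ V', G.degree w ≤ G.degree u)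
    (O : Finset V) (hO : O.card = k)
    (hOopt : ∀ O' : Finset V, O'.card = k → cov G α O' ≤ cov G α O) :
    (1 / (((V' \ (O ∩ V')).card.choose (O \ V').card : ℝ))) *
        ∑ T ∈ (V' \ (O ∩ V')).powersetCard (O \ V').card, cov G α ((O ∩ V') ∪ T)
      ≥ (1 - ε) * cov G α O := by
  set m := ⌈(4 * (k : ℝ)) / ε ^ 2⌉₊
  have hO_eq : O ∩ V' ∪ O \ V' = O := by rw [union_comm, sdiff_union_inter]
  have hcardO : #(O ∩ V') + #(O \ V') = k := hO ▸ card_inter_add_card_sdiff O V'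
  have hU : #(V' \ (O ∩ V')) = #(O \ V') + m := by
    rw [card_sdiff_of_subset inter_subset_right]
    omega
  have hsize : 2 * (#(O \ V') : ℝ) ≤ ε * (#(V' \ (O ∩ V')) - #(O \ V')) := by
    have hm : 4 * (k : ℝ) ≤ m * ε ^ 2 := (div_le_iff₀ (pow_pos hε0 2)).1 (Nat.le_ceil _)
    have ht : (#(O \ V') : ℝ) ≤ k := by exact_mod_cast (by omega : #(O \ V') ≤ k)
    rw [hU]
    push_cast
    nlinarith
  have hopt : ∀ T ∈ (V' \ (O ∩ V')).powersetCard #(O \ V'), cov G α (O ∩ V' ∪ T) ≤ cov G α O := by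
    intro T hT
    rw [mem_powersetCard] at hT
    refine hOopt _ ?_
    rw [card_union_of_disjoint (disjoint_sdiff.mono_right hT.1), hT.2, hcardO]
  have key := G.one_sub_mul_cov_le_avgCov hα0 hα1 hε0.le disjoint_sdiff
    (disjoint_sdiff_inter O V').symm (by omega) hsize
    (fun w hw u hu => hV'top u (mem_sdiff.1 hu).1 w (mem_sdiff.1 hw).2) (by rwa [hO_eq])
  rw [hO_eq] at key
  exact key

theorem stmt8 {V : Type*} [Fintype V] [DecidableEq V] (G : SimpleGraph V)
    [DecidableRel G.Adj] (α ε : ℝ) (hα0 : 1 / 3 ≤ α) (hα1 : α ≤ 1)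
    (hε0 : 0 < ε) (hε1 : ε < 1)
    (k : ℕ) (hk : k + ⌈(4 * (k : ℝ)) / ε ^ 2⌉₊ ≤ Fintype.card V)
    (V' : Finset V) (hV'card : V'.card = k + ⌈(4 * (k : ℝ)) / ε ^ 2⌉₊)
    (hV'top : ∀ u ∈ V', ∀ w ∉ V', G.degree w ≤ G.degree u)
    (O : Finset V) (hO : O.card = k)
    (hOopt : ∀ O' : Finset V, O'.card = k → cov G α O' ≤ cov G α O) :
    (1 / (((V' \ (O ∩ V')).card.choose (O \ V').card : ℝ))) *
        ∑ T ∈ (V' \ (O ∩ V')).powersetCard (O \ V').card, cov G α ((O ∩ V') ∪ T)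
      ≥ (1 - ε) * cov G α O :=
  stmt8_general G α ε hα0 hα1 hε0 hε1 k V' hV'card hV'top O hO hOopt
end

section
/- Let G = (V,E) be a finite simple graph and let 1/3 ≤ α ≤ 1. Let C ⊆ V, let v ∈ C, and let u ∈ V∖C be a vertex with N[u] ∩ C = ∅ (u is not in C, has no neighbor in C) and d(u) ≥ d(v). Then cov_α((C∖{v}) ∪ {u}) ≥ cov_α(C). -/
open Finset

open Finset

section helpers
variable {V : Type*} [Fintype V] [DecidableEq V] (G : SimpleGraph V) [DecidableRel G.Adj]

lemma mIn_card (X : Finset V) [DecidablePred (fun e : Sym2 V => ∀ y ∈ e, y ∈ X)] :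
    mIn G X = (G.edgeFinset.filter (fun e => ∀ y ∈ e, y ∈ X)).card := by
  rw [mIn, ← Set.ncard_coe_finset]
  congr 1
  ext e
  simp [SimpleGraph.mem_edgeFinset]

lemma mBtw_card (X Y : Finset V)
    [DecidablePred (fun e : Sym2 V => ∃ a ∈ X, ∃ b ∈ Y, e = s(a, b))] :
    mBtw G X Y = (G.edgeFinset.filter (fun e => ∃ a ∈ X, ∃ b ∈ Y, e = s(a, b))).card := by
  rw [mBtw, ← Set.ncard_coe_finset]
  congr 1
  ext e
  simp [SimpleGraph.mem_edgeFinset]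

lemma exists_other {e : Sym2 V} (he : e ∈ G.edgeSet) {y : V} (hy : y ∈ e) :
    ∃ w, G.Adj y w ∧ s(y, w) = e := by
  refine ⟨Sym2.Mem.other hy, ?_, Sym2.other_spec hy⟩
  have h := Sym2.other_spec hy
  rw [← h] at he
  exact he

lemma edge_card_at (x : V) (P : V → Prop) [DecidablePred P]
    [DecidablePred (fun e : Sym2 V => x ∈ e ∧ ∀ y ∈ e, y ≠ x → P y)] :
    (G.edgeFinset.filter (fun e => x ∈ e ∧ ∀ y ∈ e, y ≠ x → P y)).card
      = ((G.neighborFinset x).filter P).card := by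
  classical
  rw [show (G.edgeFinset.filter (fun e => x ∈ e ∧ ∀ y ∈ e, y ≠ x → P y))
      = ((G.neighborFinset x).filter P).image (fun w => s(x, w)) from ?_]
  · exact Finset.card_image_of_injective _ (fun a b h => Sym2.congr_right.mp h)
  ext e
  simp only [Finset.mem_filter, Finset.mem_image, SimpleGraph.mem_edgeFinset,
    SimpleGraph.mem_neighborFinset]
  constructor
  · rintro ⟨he, hx, hP⟩
    obtain ⟨w, hadj, hspec⟩ := exists_other G he hx
    refine ⟨w, ⟨hadj, hP w ?_ hadj.ne'⟩, hspec⟩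
    rw [← hspec]
    exact Sym2.mem_mk_right x w
  · rintro ⟨w, ⟨hadj, hPw⟩, rfl⟩
    refine ⟨hadj, Sym2.mem_mk_left x w, ?_⟩
    intro y hy hyx
    rcases Sym2.mem_iff.mp hy with h | h
    · exact absurd h hyx
    · exact h ▸ hPw

lemma btw_filter_eq (X : Finset V)
    [DecidablePred (fun e : Sym2 V => ∃ a ∈ X, ∃ b ∈ Xᶜ, e = s(a, b))]
    [DecidablePred (fun e : Sym2 V => (∃ y ∈ e, y ∈ X) ∧ ∃ y ∈ e, y ∉ X)] :
    G.edgeFinset.filter (fun e => ∃ a ∈ X, ∃ b ∈ Xᶜ, e = s(a, b))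
      = G.edgeFinset.filter (fun e => (∃ y ∈ e, y ∈ X) ∧ ∃ y ∈ e, y ∉ X) := by
  ext e
  simp only [Finset.mem_filter, Finset.mem_compl]
  constructor
  · rintro ⟨he, p, hp, q, hq, rfl⟩
    exact ⟨he, ⟨p, Sym2.mem_mk_left p q, hp⟩, ⟨q, Sym2.mem_mk_right p q, hq⟩⟩
  · rintro ⟨he, ⟨p, hpe, hp⟩, ⟨q, hqe, hq⟩⟩
    have hpq : p ≠ q := fun h => hq (h ▸ hp)
    exact ⟨he, p, hp, q, hq, (Sym2.mem_and_mem_iff hpq).mp ⟨hpe, hqe⟩⟩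
end helpers

theorem stmt14 {V : Type*} [Fintype V] [DecidableEq V] (G : SimpleGraph V)
    [DecidableRel G.Adj] (α : ℝ) (hα0 : 1 / 3 ≤ α) (hα1 : α ≤ 1)
    (C : Finset V) (v : V) (hv : v ∈ C)
    (u : V) (hu : u ∉ C) (hunbr : ∀ x ∈ C, ¬ G.Adj u x)
    (hd : G.degree v ≤ G.degree u) :
    cov G α (insert u (C.erase v)) ≥ cov G α C := by
  classical
  set C' := insert u (C.erase v) with hC'def
  have huv : u ≠ v := fun h => hu (h ▸ hv)
  have hnadjuv : ¬ G.Adj u v := hunbr v hv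
  have hvC' : v ∉ C' := by
    simp [hC'def, Finset.mem_insert, Ne.symm huv]
  set a := ((G.neighborFinset v).filter (· ∈ C.erase v)).card with ha_def
  set b := ((G.neighborFinset v).filter (· ∉ C)).card with hb_def
  -- Step A : mIn G C = a + mIn G C'
  have eq1 : mIn G C = a + mIn G C' := by
    have hsplit := Finset.card_filter_add_card_filter_not
      (s := G.edgeFinset.filter (fun e => ∀ y ∈ e, y ∈ C)) (p := fun e => v ∈ e)
    rw [Finset.filter_filter, Finset.filter_filter] at hsplit
    have h1 : G.edgeFinset.filter (fun e => (∀ y ∈ e, y ∈ C) ∧ v ∈ e)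
        = G.edgeFinset.filter (fun e => v ∈ e ∧ ∀ y ∈ e, y ≠ v → y ∈ C.erase v) := by
      apply Finset.filter_congr
      intro e he
      constructor
      · rintro ⟨hall, hve⟩
        exact ⟨hve, fun y hy hyv => Finset.mem_erase.mpr ⟨hyv, hall y hy⟩⟩
      · rintro ⟨hve, hall⟩
        refine ⟨fun y hy => ?_, hve⟩
        by_cases hyv : y = v
        · exact hyv ▸ hv
        · exact Finset.mem_of_mem_erase (hall y hy hyv)
    have h2 : G.edgeFinset.filter (fun e => (∀ y ∈ e, y ∈ C) ∧ ¬ v ∈ e)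
        = G.edgeFinset.filter (fun e => ∀ y ∈ e, y ∈ C') := by
      apply Finset.filter_congr
      intro e he
      constructor
      · rintro ⟨hall, hve⟩ y hy
        exact Finset.mem_insert_of_mem
          (Finset.mem_erase.mpr ⟨fun h => hve (h ▸ hy), hall y hy⟩)
      · intro hall
        have hue : u ∉ e := by
          intro hue
          obtain ⟨w, hadj, hspec⟩ :=
            exists_other G (SimpleGraph.mem_edgeFinset.mp he) hue
          have hw : w ∈ C' := hall w (by rw [← hspec]; exact Sym2.mem_mk_right u w)
          rcases Finset.mem_insert.mp hw with h | h
          · exact hadj.ne h.symm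
          · exact hunbr w (Finset.mem_of_mem_erase h) hadj
        refine ⟨fun y hy => ?_, fun hve => ?_⟩
        · rcases Finset.mem_insert.mp (hall y hy) with h | h
          · exact absurd (h ▸ hy) hue
          · exact Finset.mem_of_mem_erase h
        · rcases Finset.mem_insert.mp (hall v hve) with h | h
          · exact huv h.symm
          · exact (Finset.mem_erase.mp h).1 rfl
    rw [h1, h2, edge_card_at G v (fun y => y ∈ C.erase v)] at hsplit
    rw [mIn_card, mIn_card]
    omega
  -- Steps B & C combined : mBtw C Cᶜ + degree u + a = mBtw C' C'ᶜ + b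
  have eq23 : mBtw G C Cᶜ + G.degree u + a = mBtw G C' C'ᶜ + b := by
    -- Step B facts
    have hsplitB1 := Finset.card_filter_add_card_filter_not
      (s := G.edgeFinset.filter (fun e => (∃ y ∈ e, y ∈ C) ∧ ∃ y ∈ e, y ∉ C))
      (p := fun e => u ∈ e)
    rw [Finset.filter_filter, Finset.filter_filter] at hsplitB1
    have hzero : G.edgeFinset.filter
        (fun e => ((∃ y ∈ e, y ∈ C) ∧ (∃ y ∈ e, y ∉ C)) ∧ u ∈ e) = ∅ := by
      rw [Finset.filter_eq_empty_iff]
      rintro e he ⟨⟨⟨y, hy, hyC⟩, -⟩, hue⟩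
      obtain ⟨w, hadj, hspec⟩ := exists_other G (SimpleGraph.mem_edgeFinset.mp he) hue
      rw [← hspec] at hy
      rcases Sym2.mem_iff.mp hy with h | h
      · exact hu (h ▸ hyC)
      · exact hunbr w (h ▸ hyC) hadj
    have hsplitB2 := Finset.card_filter_add_card_filter_not
      (s := G.edgeFinset.filter
        (fun e => (((∃ y ∈ e, y ∈ C) ∧ (∃ y ∈ e, y ∉ C)) ∧ ¬ u ∈ e)))
      (p := fun e => v ∈ e)
    rw [Finset.filter_filter, Finset.filter_filter] at hsplitB2
    have hBv : G.edgeFinset.filter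
        (fun e => (((∃ y ∈ e, y ∈ C) ∧ (∃ y ∈ e, y ∉ C)) ∧ ¬ u ∈ e) ∧ v ∈ e)
        = G.edgeFinset.filter (fun e => v ∈ e ∧ ∀ y ∈ e, y ≠ v → y ∉ C) := by
      apply Finset.filter_congr
      intro e he
      have heS := SimpleGraph.mem_edgeFinset.mp he
      constructor
      · rintro ⟨⟨⟨-, ⟨y2, hy2, hy2C⟩⟩, -⟩, hve⟩
        refine ⟨hve, fun z hz hzv => ?_⟩
        obtain ⟨w, hadj, hspec⟩ := exists_other G heS hve
        rw [← hspec] at hz hy2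
        rcases Sym2.mem_iff.mp hz with h | h
        · exact absurd h hzv
        · rcases Sym2.mem_iff.mp hy2 with h2 | h2
          · exact absurd hv (h2 ▸ hy2C)
          · exact h ▸ h2 ▸ hy2C
      · rintro ⟨hve, hall⟩
        obtain ⟨w, hadj, hspec⟩ := exists_other G heS hve
        have hwe : w ∈ e := by rw [← hspec]; exact Sym2.mem_mk_right v w
        have hwC : w ∉ C := hall w hwe hadj.ne'
        have hue : u ∉ e := by
          intro hue
          rw [← hspec] at hue
          rcases Sym2.mem_iff.mp hue with h | h
          · exact huv h
          · exact hnadjuv (h ▸ hadj.symm)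
        exact ⟨⟨⟨⟨v, hve, hv⟩, ⟨w, hwe, hwC⟩⟩, hue⟩, hve⟩
    -- Step C facts
    have hsplitC1 := Finset.card_filter_add_card_filter_not
      (s := G.edgeFinset.filter (fun e => (∃ y ∈ e, y ∈ C') ∧ ∃ y ∈ e, y ∉ C'))
      (p := fun e => u ∈ e)
    rw [Finset.filter_filter, Finset.filter_filter] at hsplitC1
    have hCu : G.edgeFinset.filter
        (fun e => ((∃ y ∈ e, y ∈ C') ∧ (∃ y ∈ e, y ∉ C')) ∧ u ∈ e)
        = G.edgeFinset.filter (fun e => u ∈ e ∧ ∀ y ∈ e, y ≠ u → True) := by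
      apply Finset.filter_congr
      intro e he
      have heS := SimpleGraph.mem_edgeFinset.mp he
      constructor
      · rintro ⟨-, hue⟩
        exact ⟨hue, fun _ _ _ => trivial⟩
      · rintro ⟨hue, -⟩
        obtain ⟨w, hadj, hspec⟩ := exists_other G heS hue
        have hwe : w ∈ e := by rw [← hspec]; exact Sym2.mem_mk_right u w
        have hwC' : w ∉ C' := by
          intro hw
          rcases Finset.mem_insert.mp hw with h | h
          · exact hadj.ne h.symm
          · exact hunbr w (Finset.mem_of_mem_erase h) hadj
        exact ⟨⟨⟨u, hue, Finset.mem_insert_self u _⟩, ⟨w, hwe, hwC'⟩⟩, hue⟩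
    have hsplitC2 := Finset.card_filter_add_card_filter_not
      (s := G.edgeFinset.filter
        (fun e => (((∃ y ∈ e, y ∈ C') ∧ (∃ y ∈ e, y ∉ C')) ∧ ¬ u ∈ e)))
      (p := fun e => v ∈ e)
    rw [Finset.filter_filter, Finset.filter_filter] at hsplitC2
    have hCv : G.edgeFinset.filter
        (fun e => (((∃ y ∈ e, y ∈ C') ∧ (∃ y ∈ e, y ∉ C')) ∧ ¬ u ∈ e) ∧ v ∈ e)
        = G.edgeFinset.filter (fun e => v ∈ e ∧ ∀ y ∈ e, y ≠ v → y ∈ C.erase v) := by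
      apply Finset.filter_congr
      intro e he
      have heS := SimpleGraph.mem_edgeFinset.mp he
      constructor
      · rintro ⟨⟨⟨⟨y1, hy1, hy1C⟩, -⟩, hue⟩, hve⟩
        refine ⟨hve, fun z hz hzv => ?_⟩
        obtain ⟨w, hadj, hspec⟩ := exists_other G heS hve
        rw [← hspec] at hz hy1 hue
        have hwC' : w ∈ C' := by
          rcases Sym2.mem_iff.mp hy1 with h | h
          · exact absurd (h ▸ hy1C) hvC'
          · exact h ▸ hy1C
        have hw : w ∈ C.erase v := by
          rcases Finset.mem_insert.mp hwC' with h | h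
          · exact absurd (by simp [h] : u ∈ s(v, w)) hue
          · exact h
        rcases Sym2.mem_iff.mp hz with h | h
        · exact absurd h hzv
        · exact h ▸ hw
      · rintro ⟨hve, hall⟩
        obtain ⟨w, hadj, hspec⟩ := exists_other G heS hve
        have hwe : w ∈ e := by rw [← hspec]; exact Sym2.mem_mk_right v w
        have hw : w ∈ C.erase v := hall w hwe hadj.ne'
        have hue : u ∉ e := by
          intro hue
          rw [← hspec] at hue
          rcases Sym2.mem_iff.mp hue with h | h
          · exact huv h
          · exact hu (Finset.mem_of_mem_erase (h ▸ hw))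
        exact ⟨⟨⟨⟨w, hwe, Finset.mem_insert_of_mem hw⟩, ⟨v, hve, hvC'⟩⟩, hue⟩, hve⟩
    have hCrest : G.edgeFinset.filter
          (fun e => (((∃ y ∈ e, y ∈ C') ∧ (∃ y ∈ e, y ∉ C')) ∧ ¬ u ∈ e) ∧ ¬ v ∈ e)
        = G.edgeFinset.filter
          (fun e => (((∃ y ∈ e, y ∈ C) ∧ (∃ y ∈ e, y ∉ C)) ∧ ¬ u ∈ e) ∧ ¬ v ∈ e) := by
      apply Finset.filter_congr
      intro e he
      have hmem : ∀ (hue : u ∉ e) (hve : v ∉ e), ∀ y ∈ e, (y ∈ C' ↔ y ∈ C) := by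
        intro hue hve y hy
        have hyu : y ≠ u := fun h => hue (h ▸ hy)
        have hyv : y ≠ v := fun h => hve (h ▸ hy)
        simp [hC'def, Finset.mem_insert, Finset.mem_erase, hyu, hyv]
      constructor
      · rintro ⟨⟨⟨⟨y1, hy1, hy1C⟩, ⟨y2, hy2, hy2C⟩⟩, hue⟩, hve⟩
        exact ⟨⟨⟨⟨y1, hy1, (hmem hue hve y1 hy1).mp hy1C⟩,
          ⟨y2, hy2, fun h => hy2C ((hmem hue hve y2 hy2).mpr h)⟩⟩, hue⟩, hve⟩
      · rintro ⟨⟨⟨⟨y1, hy1, hy1C⟩, ⟨y2, hy2, hy2C⟩⟩, hue⟩, hve⟩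
        exact ⟨⟨⟨⟨y1, hy1, (hmem hue hve y1 hy1).mpr hy1C⟩,
          ⟨y2, hy2, fun h => hy2C ((hmem hue hve y2 hy2).mp h)⟩⟩, hue⟩, hve⟩
    -- now collect all card equalities
    have hdegu : ((G.neighborFinset u).filter (fun _ => True)).card = G.degree u := by
      rw [Finset.filter_true_of_mem (fun _ _ => trivial),
        SimpleGraph.card_neighborFinset_eq_degree]
    rw [hzero] at hsplitB1
    simp only [Finset.card_empty, zero_add] at hsplitB1
    rw [hBv, edge_card_at G v (fun y => y ∉ C)] at hsplitB2
    rw [hCu, edge_card_at G u (fun _ => True), hdegu] at hsplitC1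
    rw [hCv, edge_card_at G v (fun y => y ∈ C.erase v), hCrest] at hsplitC2
    rw [mBtw_card, mBtw_card, btw_filter_eq, btw_filter_eq]
    omega
  -- Step D : a + b = degree v
  have eq4 : a + b = G.degree v := by
    rw [ha_def, hb_def, ← SimpleGraph.card_neighborFinset_eq_degree]
    have h : (G.neighborFinset v).filter (· ∈ C.erase v)
        = (G.neighborFinset v).filter (· ∈ C) := by
      apply Finset.filter_congr
      intro w hw
      have hwv : w ≠ v := by
        have hadj : G.Adj v w := by simpa using hw
        exact hadj.ne'
      simp [Finset.mem_erase, hwv]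
    rw [h]
    exact Finset.card_filter_add_card_filter_not (p := (· ∈ C))
  -- Final arithmetic
  have hab : (a : ℝ) + b ≤ G.degree u := by
    have : a + b ≤ G.degree u := eq4 ▸ hd
    exact_mod_cast this
  have eq3 : (mBtw G C' C'ᶜ : ℝ) = mBtw G C Cᶜ + G.degree u + a - b := by
    have := eq23
    have h := congrArg (fun n : ℕ => (n : ℝ)) this
    push_cast at h
    linarith
  rw [ge_iff_le, cov, cov, eq1, eq3]
  push_cast
  have h0a : (0:ℝ) ≤ a := Nat.cast_nonneg a
  nlinarith [mul_nonneg (by linarith : (0:ℝ) ≤ 3 * α - 1) h0a,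
    mul_le_mul_of_nonneg_left hab (by linarith : (0:ℝ) ≤ α)]
end

section
/- Let G = (V,E) be a finite simple graph with |V| = n and let 0 ≤ α ≤ 1/3. Let v₁, v₂, …, vₙ be an enumeration of V with d(v₁) ≤ d(v₂) ≤ … ≤ d(vₙ). For a k-element set C = {v_{i₁}, …, v_{i_k}} with i₁ < … < i_k, identify C with the increasing index sequence (i₁, …, i_k). Suppose C is a k-element subset of V that minimizes cov_α among all k-element subsets, and that C is lexicographically smallest (with respect to these index sequences) among all such minimizers. Let v_j be the element of C of largest index, i.e., j = i_k. Then C is a dominating set of the induced subgraph G[{v₁, …, v_j}]: every vertex v_i with 1 ≤ i ≤ j is in C or has a neighbor in C. -/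
/-!
Suppose some vertex `u = vᵢ` with `i ≤ j` is neither in `C` nor adjacent to `C`, and let
`w = v_j`, `T = C ∖ {w}`. Adding a vertex `x ∉ T` to `T` changes `cov_α` by
`(1 - 3α)·|N(x) ∩ T| + α·d(x)`, so swapping `w` for `u` changes it by
`-(1 - 3α)·|N(w) ∩ T| - α·(d(w) - d(u)) ≤ 0`, as `α ≤ 1/3` and `d(u) ≤ d(w)`. Hence
`T ∪ {u}` is again a minimiser, and its index sequence is lexicographically smaller than that
of `C`, since `i < j`.
-/

open Finset

theorem Finset.lex_sort_insert_of_lt {α : Type*} [LinearOrder α] {i j : α} (hij : i < j)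
    {s : Finset α} (hi : i ∉ s) :
    List.Lex (· < ·) ((insert i s).sort (· ≤ ·)) ((insert j s).sort (· ≤ ·)) := by
  induction s using Finset.induction_on_min with
  | empty => simpa only [insert_empty_eq, sort_singleton] using List.Lex.rel hij
  | insert a s ha ih =>
    have has : a ∉ s := fun h => (ha a h).false
    obtain hai | hia := lt_or_gt_of_ne (show a ≠ i by rintro rfl; exact hi (mem_insert_self a s))
    · have hsort {x : α} (hax : a < x) :
          (insert x (insert a s)).sort (· ≤ ·) = a :: (insert x s).sort (· ≤ ·) := by
        rw [insert_comm, sort_insert]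
        · simpa [hax.le] using fun b hb => (ha b hb).le
        · simpa [hax.ne] using has
      rw [hsort hai, hsort (hai.trans hij)]
      exact .cons (ih fun h => hi (mem_insert_of_mem h))
    · rw [sort_insert]
      · obtain ⟨b, l, hbl⟩ := List.exists_cons_of_ne_nil
          (List.ne_nil_of_mem ((mem_sort (· ≤ ·)).2 (mem_insert_self j (insert a s))))
        have hb : b ∈ insert j (insert a s) :=
          (mem_sort (· ≤ ·)).1 (hbl ▸ List.mem_cons_self)
        rw [hbl]
        refine .rel ?_
        simp only [mem_insert] at hb
        rcases hb with rfl | rfl | hb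
        exacts [hij, hia, hia.trans (ha b hb)]
      · simpa [hia.le] using fun b hb => (hia.trans (ha b hb)).le
      · exact hi

namespace SimpleGraph

variable {V : Type*}

lemma mk_mem_image_mk_left_iff {x a b : V} {T : Set V} :
    s(a, b) ∈ (fun y => s(x, y)) '' T ↔ (a = x ∧ b ∈ T) ∨ (b = x ∧ a ∈ T) := by
  simp only [Set.mem_image, Sym2.eq_iff]
  grind

lemma mk_mem_edgesBetween_iff (G : SimpleGraph V) (X Y : Finset V) (a b : V) :
    s(a, b) ∈ {e ∈ G.edgeSet | ∃ u ∈ X, ∃ w ∈ Y, e = s(u, w)} ↔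
      G.Adj a b ∧ (a ∈ X ∧ b ∈ Y ∨ b ∈ X ∧ a ∈ Y) := by
  simp only [Set.mem_ofPred_eq, mem_edgeSet, Sym2.eq_iff]
  grind

lemma ncard_image_mk_left (x : V) (T : Finset V) :
    ((fun y => s(x, y)) '' (T : Set V)).ncard = #T :=
  (Set.ncard_image_of_injective _ (Sym2.mkEmbedding x).injective).trans (Set.ncard_coe_finset T)

variable [Fintype V] [DecidableEq V] (G : SimpleGraph V) [DecidableRel G.Adj] {x : V}
  {S : Finset V}

lemma mIn_insert (hx : x ∉ S) : mIn G (insert x S) = mIn G S + #(G.neighborFinset x ∩ S) := by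
  have hset : {e ∈ G.edgeSet | ∀ v ∈ e, v ∈ insert x S}
      = {e ∈ G.edgeSet | ∀ v ∈ e, v ∈ S}
        ∪ (fun y => s(x, y)) '' ↑(G.neighborFinset x ∩ S) := by
    ext e
    induction e with
    | _ a b =>
      simp only [Set.mem_union, mk_mem_image_mk_left_iff, Set.mem_ofPred_eq, Sym2.forall_mem_pair,
        mem_edgeSet, coe_inter, Set.mem_inter_iff, mem_coe, mem_neighborFinset, mem_insert]
      grind [adj_comm, Adj.ne]
  have hdisj : Disjoint {e ∈ G.edgeSet | ∀ v ∈ e, v ∈ S}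
      ((fun y => s(x, y)) '' ↑(G.neighborFinset x ∩ S)) := by
    rw [Set.disjoint_left]
    rintro e ⟨_, he⟩ ⟨y, _, rfl⟩
    exact hx (he x (Sym2.mem_mk_left x y))
  rw [mIn, hset, Set.ncard_union_eq hdisj, ncard_image_mk_left]
  rfl

/-- The cut gains the edges from `x` to `N(x) ∖ S` and loses those from `x` to `N(x) ∩ S`. -/
lemma mBtw_insert (hx : x ∉ S) :
    mBtw G (insert x S) (insert x S)ᶜ + 2 * #(G.neighborFinset x ∩ S)
      = mBtw G S Sᶜ + G.degree x := by
  let star (T : Finset V) : Set (Sym2 V) := (fun y => s(x, y)) '' T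
  have hset : {e ∈ G.edgeSet | ∃ u ∈ insert x S, ∃ w ∈ (insert x S)ᶜ, e = s(u, w)}
        ∪ star (G.neighborFinset x ∩ S)
      = {e ∈ G.edgeSet | ∃ u ∈ S, ∃ w ∈ Sᶜ, e = s(u, w)}
        ∪ star (G.neighborFinset x \ S) := by
    ext e
    induction e with
    | _ a b =>
      simp only [star, Set.mem_union, mk_mem_image_mk_left_iff]
      rw [mk_mem_edgesBetween_iff, mk_mem_edgesBetween_iff]
      simp only [coe_inter, coe_sdiff, Set.mem_inter_iff, Set.mem_sdiff, mem_coe, mem_insert,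
        mem_compl, mem_neighborFinset]
      grind [adj_comm, Adj.ne]
  have hdisj₁ : Disjoint {e ∈ G.edgeSet | ∃ u ∈ insert x S, ∃ w ∈ (insert x S)ᶜ, e = s(u, w)}
      (star (G.neighborFinset x ∩ S)) := by
    rw [Set.disjoint_left]
    rintro _ he ⟨y, hy, rfl⟩
    rw [mk_mem_edgesBetween_iff] at he
    simp only [mem_insert, mem_compl] at he
    simp only [coe_inter, Set.mem_inter_iff, mem_coe] at hy
    grind
  have hdisj₂ : Disjoint {e ∈ G.edgeSet | ∃ u ∈ S, ∃ w ∈ Sᶜ, e = s(u, w)}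
      (star (G.neighborFinset x \ S)) := by
    rw [Set.disjoint_left]
    rintro _ he ⟨y, hy, rfl⟩
    rw [mk_mem_edgesBetween_iff] at he
    simp only [mem_compl] at he
    simp only [coe_sdiff, Set.mem_sdiff, mem_coe] at hy
    grind
  have hcard := congrArg Set.ncard hset
  rw [Set.ncard_union_eq hdisj₁, Set.ncard_union_eq hdisj₂, ncard_image_mk_left,
    ncard_image_mk_left] at hcard
  have hdeg := card_inter_add_card_sdiff (G.neighborFinset x) S
  rw [card_neighborFinset_eq_degree] at hdeg
  rw [mBtw, mBtw]
  omega

lemma cov_insert (α : ℝ) (hx : x ∉ S) :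
    cov G α (insert x S)
      = cov G α S + (1 - 3 * α) * #(G.neighborFinset x ∩ S) + α * G.degree x := by
  have hIn : (mIn G (insert x S) : ℝ) = mIn G S + #(G.neighborFinset x ∩ S) := by
    exact_mod_cast mIn_insert G hx
  have hBtw : (mBtw G (insert x S) (insert x S)ᶜ : ℝ) + 2 * #(G.neighborFinset x ∩ S)
      = mBtw G S Sᶜ + G.degree x := by
    exact_mod_cast mBtw_insert G hx
  rw [cov, cov]
  linear_combination (1 - α) * hIn + α * hBtw

lemma cov_insert_le_cov_insert {α : ℝ} (hα0 : 0 ≤ α) (hα1 : α ≤ 1 / 3) {u w : V}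
    (hu : u ∉ S) (hw : w ∉ S) (hN : Disjoint (G.neighborFinset u) S)
    (hdeg : G.degree u ≤ G.degree w) :
    cov G α (insert u S) ≤ cov G α (insert w S) := by
  rw [cov_insert G α hu, cov_insert G α hw, disjoint_iff_inter_eq_empty.1 hN, card_empty,
    Nat.cast_zero, mul_zero, add_zero]
  have hNw : (0 : ℝ) ≤ (1 - 3 * α) * #(G.neighborFinset w ∩ S) :=
    mul_nonneg (by linarith) (Nat.cast_nonneg _)
  have hαdeg : α * G.degree u ≤ α * G.degree w := by gcongr
  linarith

end SimpleGraph

theorem stmt17 {V : Type*} [Fintype V] [DecidableEq V] (G : SimpleGraph V)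
    [DecidableRel G.Adj] (α : ℝ) (hα0 : 0 ≤ α) (hα1 : α ≤ 1 / 3)
    (e : Fin (Fintype.card V) ≃ V)
    (hsorted : ∀ i j : Fin (Fintype.card V), i ≤ j → G.degree (e i) ≤ G.degree (e j))
    (k : ℕ) (C : Finset V) (hCcard : C.card = k) (hCne : C.Nonempty)
    (hmin : ∀ C' : Finset V, C'.card = k → cov G α C ≤ cov G α C')
    (hlex : ∀ C' : Finset V, C'.card = k → cov G α C' = cov G α C → C' ≠ C →
      List.Lex (· < ·) ((C.image e.symm).sort (· ≤ ·)) ((C'.image e.symm).sort (· ≤ ·)))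
    (j : Fin (Fintype.card V)) (hj : j = (C.image e.symm).max' (hCne.image e.symm)) :
    ∀ i : Fin (Fintype.card V), i ≤ j → e i ∈ C ∨ ∃ u ∈ C, G.Adj (e i) u := by
  intro i hij
  by_contra! ⟨hiC, hnoadj⟩
  set A := C.image e.symm
  have hjA : j ∈ A := hj ▸ max'_mem _ _
  have hiA : i ∉ A := by simpa [A, Equiv.symm_apply_eq] using hiC
  have hwC : e j ∈ C := by simpa [A, Equiv.symm_apply_eq] using hjA
  have hij : i < j := lt_of_le_of_ne hij (by rintro rfl; exact hiA hjA)
  have hiT : e i ∉ C.erase (e j) := fun h => hiC (mem_of_mem_erase h)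
  set C' := insert (e i) (C.erase (e j))
  have hcard : C'.card = k := by
    rw [card_insert_of_notMem hiT, card_erase_of_mem hwC, ← hCcard,
      Nat.sub_add_cancel (card_pos.2 hCne)]
  have hN : Disjoint (G.neighborFinset (e i)) (C.erase (e j)) := disjoint_left.2
    fun y hy hyT => hnoadj y (mem_of_mem_erase hyT) ((G.mem_neighborFinset _ _).1 hy)
  have hcov : cov G α C' ≤ cov G α C := by
    conv_rhs => rw [← insert_erase hwC]
    exact G.cov_insert_le_cov_insert hα0 hα1 hiT (notMem_erase _ _) hN (hsorted i j hij.le)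
  have hCC' := hlex C' hcard (le_antisymm hcov (hmin C' hcard))
    fun h => hiC (h ▸ mem_insert_self _ _)
  have hC'A : C'.image e.symm = insert i (A.erase j) := by
    simp [C', A, image_insert, image_erase e.symm.injective]
  have hC'C := lex_sort_insert_of_lt hij (s := A.erase j) (fun h => hiA (mem_of_mem_erase h))
  rw [insert_erase hjA, ← hC'A] at hC'C
  exact asymm hCC' hC'C
end

section
/- Let k and N be positive integers and let 0 ≤ α ≤ 1. Let G = (V,E) be the graph with V = H ⊎ L ⊎ O, where |H| = N, |L| = kN, |O| = k, and the edges are as follows: L is partitioned into N blocks of size k, each block attached as pendant vertices to a distinct vertex of H (each vertex of L is adjacent exactly to its associated vertex of H); O induces a complete graph on k vertices; there are no other edges. Then: (a) for every k-element subset S ⊆ H, cov_α(S) = α·k²; and (b) cov_α(O) = (1−α)·k(k−1)/2. -/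
open Finset

/-- The gap example graph: vertex set `H ⊎ L ⊎ O` with `H = Fin N`,
`L = Fin N × Fin k` (the block `{i} × Fin k` consists of pendant vertices attached
to the vertex `i ∈ H`), and `O = Fin k` inducing a complete graph. -/
def gapGraph (N k : ℕ) : SimpleGraph (Fin N ⊕ (Fin N × Fin k) ⊕ Fin k) :=
  SimpleGraph.fromRel (fun x y =>
    (∃ (i : Fin N) (p : Fin N × Fin k),
        x = Sum.inl i ∧ y = Sum.inr (Sum.inl p) ∧ p.1 = i) ∨
    (∃ a b : Fin k, x = Sum.inr (Sum.inr a) ∧ y = Sum.inr (Sum.inr b)))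

lemma gap_adj {N k : ℕ} (x y : Fin N ⊕ (Fin N × Fin k) ⊕ Fin k) :
    (gapGraph N k).Adj x y ↔
    (∃ p : Fin N × Fin k,
        (x = Sum.inl p.1 ∧ y = Sum.inr (Sum.inl p)) ∨
        (y = Sum.inl p.1 ∧ x = Sum.inr (Sum.inl p))) ∨
    (∃ a b : Fin k, a ≠ b ∧ x = Sum.inr (Sum.inr a) ∧ y = Sum.inr (Sum.inr b)) := by
  simp only [gapGraph, SimpleGraph.fromRel_adj]
  constructor
  · rintro ⟨hne, (⟨i, p, rfl, rfl, rfl⟩ | ⟨a, b, rfl, rfl⟩) | (⟨i, p, rfl, rfl, rfl⟩ | ⟨a, b, rfl, rfl⟩)⟩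
    · exact Or.inl ⟨p, Or.inl ⟨rfl, rfl⟩⟩
    · exact Or.inr ⟨a, b, by simp_all, rfl, rfl⟩
    · exact Or.inl ⟨p, Or.inr ⟨rfl, rfl⟩⟩
    · exact Or.inr ⟨b, a, by simp_all, rfl, rfl⟩
  · rintro (⟨p, (⟨rfl, rfl⟩ | ⟨rfl, rfl⟩)⟩ | ⟨a, b, hab, rfl, rfl⟩)
    · exact ⟨by simp, Or.inl (Or.inl ⟨p.1, p, rfl, rfl, rfl⟩)⟩
    · exact ⟨by simp, Or.inr (Or.inl ⟨p.1, p, rfl, rfl, rfl⟩)⟩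
    · exact ⟨by simp [hab], Or.inl (Or.inr ⟨a, b, rfl, rfl⟩)⟩

theorem stmt18 (k N : ℕ) (hk : 0 < k) (hN : 0 < N) (α : ℝ) (hα0 : 0 ≤ α) (hα1 : α ≤ 1) :
    (∀ S : Finset (Fin N ⊕ (Fin N × Fin k) ⊕ Fin k),
        S ⊆ (Finset.univ : Finset (Fin N)).image Sum.inl → S.card = k →
        cov (gapGraph N k) α S = α * (k : ℝ) ^ 2) ∧
      cov (gapGraph N k) α
          ((Finset.univ : Finset (Fin k)).image (fun a => Sum.inr (Sum.inr a)))
        = (1 - α) * ((k : ℝ) * ((k : ℝ) - 1) / 2) := by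
  constructor
  · intro S hS hcard
    obtain ⟨S', -, rfl⟩ := Finset.subset_image_iff.mp hS
    have hS'card : S'.card = k := by
      rwa [Finset.card_image_of_injective _ Sum.inl_injective] at hcard
    -- m(S) = 0
    have hmIn : mIn (gapGraph N k) (S'.image Sum.inl) = 0 := by
      unfold mIn
      have hempty : {e ∈ (gapGraph N k).edgeSet | ∀ v ∈ e, v ∈ S'.image Sum.inl} =
          (∅ : Set (Sym2 (Fin N ⊕ (Fin N × Fin k) ⊕ Fin k))) := by
        ext e
        induction e with
        | _ u v =>
          simp only [Set.mem_setOf_eq, Set.mem_empty_iff_false, iff_false, not_and,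
            SimpleGraph.mem_edgeSet, Sym2.mem_iff]
          intro hadj hmem
          have hu := hmem u (Or.inl rfl)
          have hv := hmem v (Or.inr rfl)
          simp only [Finset.mem_image] at hu hv
          obtain ⟨i, -, rfl⟩ := hu
          obtain ⟨j, -, rfl⟩ := hv
          rcases (gap_adj _ _).mp hadj with ⟨p, (⟨-, h⟩ | ⟨-, h⟩)⟩ | ⟨a, b, -, h, -⟩ <;>
            exact absurd h (by simp)
      rw [hempty, Set.ncard_empty]
    -- m(S, Sᶜ) = k * k
    have hmBtw : mBtw (gapGraph N k) (S'.image Sum.inl) (S'.image Sum.inl)ᶜ = k * k := by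
      unfold mBtw
      have hset : {e ∈ (gapGraph N k).edgeSet | ∃ u ∈ S'.image Sum.inl,
          ∃ w ∈ (S'.image Sum.inl)ᶜ, e = s(u, w)} =
          (((S' ×ˢ (Finset.univ : Finset (Fin k))).image
            (fun p => s(Sum.inl p.1, Sum.inr (Sum.inl p)))) :
            Finset (Sym2 (Fin N ⊕ (Fin N × Fin k) ⊕ Fin k))) := by
        ext e
        simp only [Set.mem_setOf_eq, Finset.coe_image, Set.mem_image, Finset.mem_coe,
          Finset.mem_product, Finset.mem_univ, and_true]
        constructor
        · rintro ⟨he, u, hu, w, hw, rfl⟩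
          simp only [Finset.mem_image] at hu
          obtain ⟨i, hi, rfl⟩ := hu
          have hadj : (gapGraph N k).Adj (Sum.inl i) w := he
          rcases (gap_adj _ _).mp hadj with ⟨p, (⟨hp1, rfl⟩ | ⟨-, h⟩)⟩ | ⟨a, b, -, h, -⟩
          · obtain rfl : i = p.1 := Sum.inl_injective hp1
            exact ⟨p, hi, rfl⟩
          · exact absurd h (by simp)
          · exact absurd h (by simp)
        · rintro ⟨p, hp, rfl⟩
          refine ⟨?_, Sum.inl p.1, Finset.mem_image_of_mem _ hp,
            Sum.inr (Sum.inl p), ?_, rfl⟩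
          · exact (gap_adj _ _).mpr (Or.inl ⟨p, Or.inl ⟨rfl, rfl⟩⟩)
          · simp [Finset.mem_compl]
      rw [hset, Set.ncard_coe_finset, Finset.card_image_of_injective, Finset.card_product,
        hS'card, Finset.card_univ, Fintype.card_fin]
      intro p q h
      rw [Sym2.eq_iff] at h
      rcases h with ⟨-, h⟩ | ⟨h, -⟩
      · exact Sum.inl_injective (Sum.inr_injective h)
      · simp at h
    rw [cov, hmIn, hmBtw]
    push_cast
    ring
  · -- part (b)
    set O : Finset (Fin N ⊕ (Fin N × Fin k) ⊕ Fin k) :=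
      (Finset.univ : Finset (Fin k)).image (fun a => Sum.inr (Sum.inr a)) with hO
    have hmBtw : mBtw (gapGraph N k) O Oᶜ = 0 := by
      unfold mBtw
      have hempty : {e ∈ (gapGraph N k).edgeSet | ∃ u ∈ O, ∃ w ∈ Oᶜ, e = s(u, w)} =
          (∅ : Set (Sym2 (Fin N ⊕ (Fin N × Fin k) ⊕ Fin k))) := by
        ext e
        simp only [Set.mem_setOf_eq, Set.mem_empty_iff_false, iff_false, not_and]
        rintro he ⟨u, hu, w, hw, rfl⟩
        simp only [hO, Finset.mem_image, Finset.mem_univ, true_and] at hu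
        obtain ⟨a, rfl⟩ := hu
        have hadj : (gapGraph N k).Adj (Sum.inr (Sum.inr a)) w := he
        rcases (gap_adj _ _).mp hadj with ⟨p, (⟨h, -⟩ | ⟨-, h⟩)⟩ | ⟨a', b, -, -, rfl⟩
        · exact absurd h (by simp)
        · exact absurd h (by simp)
        · rw [Finset.mem_compl] at hw
          exact hw (by simp [hO])
      rw [hempty, Set.ncard_empty]
    have hmIn : mIn (gapGraph N k) O = k * (k-1) / 2 := by
      unfold mIn
      have hset : {e ∈ (gapGraph N k).edgeSet | ∀ v ∈ e, v ∈ O} =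
          Sym2.map (fun a : Fin k => Sum.inr (Sum.inr a)) '' (⊤ : SimpleGraph (Fin k)).edgeSet := by
        ext e
        induction e with
        | _ u v =>
          simp only [Set.mem_setOf_eq, SimpleGraph.mem_edgeSet, Sym2.mem_iff]
          constructor
          · rintro ⟨hadj, hmem⟩
            rcases (gap_adj _ _).mp hadj with ⟨p, (⟨rfl, -⟩ | ⟨rfl, -⟩)⟩ | ⟨a, b, hab, rfl, rfl⟩
            · have := hmem (Sum.inl p.1) (Or.inl rfl); simp [hO] at this
            · have := hmem (Sum.inl p.1) (Or.inr rfl); simp [hO] at this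
            · exact ⟨s(a, b), hab, rfl⟩
          · rintro ⟨e', he', heq⟩
            induction e' with
            | _ a b =>
              simp only [Sym2.map_pair_eq] at heq
              rw [Sym2.eq_iff] at heq
              have hab : a ≠ b := he'
              rcases heq with ⟨rfl, rfl⟩ | ⟨rfl, rfl⟩
              · exact ⟨(gap_adj _ _).mpr (Or.inr ⟨a, b, hab, rfl, rfl⟩),
                  by rintro v (rfl | rfl) <;> simp [hO]⟩
              · exact ⟨(gap_adj _ _).mpr (Or.inr ⟨b, a, hab.symm, rfl, rfl⟩),
                  by rintro v (rfl | rfl) <;> simp [hO]⟩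
      rw [hset, Set.ncard_image_of_injective _ (Sym2.map.injective (by
        intro a b h; simpa using h)),
        ← SimpleGraph.coe_edgeFinset, Set.ncard_coe_finset,
        SimpleGraph.card_edgeFinset_top_eq_card_choose_two, Fintype.card_fin,
        Nat.choose_two_right]
    rw [cov, hmIn, hmBtw]
    have h2 : ((k * (k-1) / 2 : ℕ) : ℝ) = (k : ℝ) * ((k : ℝ) - 1) / 2 := by
      rw [← Nat.choose_two_right, Nat.cast_choose_two]
    rw [h2]
    push_cast
    ring
end
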